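/- Let d2, a2, q > 0, let 0 ≤ x1 < L, and let 0 < h1 < h2. Suppose w1 is a solution of the upstream toxicant boundary value problem on [x1, L] with toxicant input rate h1 and w2 is a solution with toxicant input rate h2 (all other parameters d2, a2, q equal). Then w1(x) < w2(x) for every x ∈ (x1, L). (The solution of the upstream problem is strictly increasing with respect to h.) -/

import Mathlib

open Filter Set

lemma ev_lt_right' {f : ℝ → ℝ} {x c : ℝ} (hf : HasDerivAt f c x) (hc : c < 0) :
    ∀ᶠ y in nhdsWithin x (Set.Ioi x), f y < f x := by
  have h1 : Filter.Tendsto (slope f x) (nhdsWithin x {x}ᶜ) (nhds c) :=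
    hasDerivAt_iff_tendsto_slope.mp hf
  have h2 : ∀ᶠ y in nhdsWithin x {x}ᶜ, slope f x y < 0 := h1.eventually_lt_const hc
  have h3 : nhdsWithin x (Set.Ioi x) ≤ nhdsWithin x {x}ᶜ :=
    nhdsWithin_mono _ (fun y hy => ne_of_gt hy)
  filter_upwards [h3 h2, self_mem_nhdsWithin] with y hy hy'
  have hxy : (0:ℝ) < y - x := sub_pos.mpr hy'
  have hs : (f y - f x) / (y - x) < 0 := by simpa [slope_def_field] using hy
  rcases div_neg_iff.mp hs with ⟨h, _⟩ | ⟨h, _⟩ <;> linarith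

lemma ev_lt_left' {f : ℝ → ℝ} {x c : ℝ} (hf : HasDerivAt f c x) (hc : 0 < c) :
    ∀ᶠ y in nhdsWithin x (Set.Iio x), f y < f x := by
  have h1 : Filter.Tendsto (slope f x) (nhdsWithin x {x}ᶜ) (nhds c) :=
    hasDerivAt_iff_tendsto_slope.mp hf
  have h2 : ∀ᶠ y in nhdsWithin x {x}ᶜ, 0 < slope f x y := h1.eventually_const_lt hc
  have h3 : nhdsWithin x (Set.Iio x) ≤ nhdsWithin x {x}ᶜ :=
    nhdsWithin_mono _ (fun y hy => ne_of_lt hy)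
  filter_upwards [h3 h2, self_mem_nhdsWithin] with y hy hy'
  have hxy : y - x < 0 := sub_neg.mpr hy'
  have hs : 0 < (f y - f x) / (y - x) := by simpa [slope_def_field] using hy
  rcases div_pos_iff.mp hs with ⟨h, h'⟩ | ⟨h, _⟩ <;> linarith

lemma ev_gt_left' {f : ℝ → ℝ} {x c : ℝ} (hf : HasDerivAt f c x) (hc : c < 0) :
    ∀ᶠ y in nhdsWithin x (Set.Iio x), f x < f y := by
  have h1 : Filter.Tendsto (slope f x) (nhdsWithin x {x}ᶜ) (nhds c) :=
    hasDerivAt_iff_tendsto_slope.mp hf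
  have h2 : ∀ᶠ y in nhdsWithin x {x}ᶜ, slope f x y < 0 := h1.eventually_lt_const hc
  have h3 : nhdsWithin x (Set.Iio x) ≤ nhdsWithin x {x}ᶜ :=
    nhdsWithin_mono _ (fun y hy => ne_of_lt hy)
  filter_upwards [h3 h2, self_mem_nhdsWithin] with y hy hy'
  have hxy : y - x < 0 := sub_neg.mpr hy'
  have hs : (f y - f x) / (y - x) < 0 := by simpa [slope_def_field] using hy
  rcases div_neg_iff.mp hs with ⟨h, h'⟩ | ⟨h, _⟩ <;> linarith



/-- `w` is a solution of the upstream toxicant boundary value problem with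
parameters `d2, a2, h, q` on the interval `[x1, L]`. -/
def IsUpstreamSolution (d2 a2 h q x1 L : ℝ) (w : ℝ → ℝ) : Prop :=
  ContDiff ℝ 2 w ∧
  (∀ x ∈ Set.Icc x1 L,
      d2 * deriv (deriv w) x - a2 * deriv w x + h - q * w x = 0) ∧
  d2 * deriv w x1 - a2 * w x1 = 0 ∧ deriv w L = 0

/-- the solution of the upstream problem is strictly increasing
with respect to the toxicant input rate `h`. -/
theorem upstream_mono_in_h
    (d2 a2 q x1 L h1 h2 : ℝ) (w1 w2 : ℝ → ℝ)
    (hd2 : 0 < d2) (ha2 : 0 < a2) (hq : 0 < q)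
    (hx1 : 0 ≤ x1) (hx1L : x1 < L)
    (hh1 : 0 < h1) (hh12 : h1 < h2)
    (hw1 : IsUpstreamSolution d2 a2 h1 q x1 L w1)
    (hw2 : IsUpstreamSolution d2 a2 h2 q x1 L w2) :
    ∀ x ∈ Set.Ioo x1 L, w1 x < w2 x := by
  obtain ⟨hc1, hode1, hb1, hbL1⟩ := hw1
  obtain ⟨hc2, hode2, hb2, hbL2⟩ := hw2
  set v : ℝ → ℝ := fun x => w2 x - w1 x with hvdef
  have hcv : ContDiff ℝ 2 v := hc2.sub hc1
  have hd1' : Differentiable ℝ w1 := hc1.differentiable (by norm_num)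
  have hd2' : Differentiable ℝ w2 := hc2.differentiable (by norm_num)
  -- deriv v as a function
  have hdv : deriv v = fun x => deriv w2 x - deriv w1 x := by
    funext x
    exact deriv_sub (hd2' x) (hd1' x)
  have hcdv1 : ContDiff ℝ 1 (deriv w1) := (contDiff_succ_iff_deriv.mp (by norm_num [hc1] : ContDiff ℝ (1+1) w1)).2.2
  have hcdv2 : ContDiff ℝ 1 (deriv w2) := (contDiff_succ_iff_deriv.mp (by norm_num [hc2] : ContDiff ℝ (1+1) w2)).2.2
  have hcu : ContDiff ℝ 1 (deriv v) := by
    rw [hdv]; exact hcdv2.sub hcdv1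
  have hdu : Differentiable ℝ (deriv v) := hcu.differentiable (by norm_num)
  have hddv : ∀ x, deriv (deriv v) x = deriv (deriv w2) x - deriv (deriv w1) x := by
    intro x
    rw [hdv]
    exact deriv_fun_sub (hcdv2.differentiable (by norm_num) x) (hcdv1.differentiable (by norm_num) x)
  -- the ODE for v
  have hodev : ∀ x ∈ Set.Icc x1 L,
      d2 * deriv (deriv v) x = a2 * deriv v x + q * v x - (h2 - h1) := by
    intro x hx
    have e1 := hode1 x hx
    have e2 := hode2 x hx
    rw [hddv x, hdv]
    simp only [hvdef]
    ring_nf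
    ring_nf at e1 e2
    linarith
  -- boundary for v
  have hbv : d2 * deriv v x1 = a2 * v x1 := by
    rw [hdv]; simp only [hvdef]; ring_nf; ring_nf at hb1 hb2; linarith
  have hbvL : deriv v L = 0 := by rw [hdv]; simp [hbL1, hbL2]
  -- suppose not
  intro x hx
  by_contra hlt
  push_neg at hlt
  have hvx : v x ≤ 0 := by simp [hvdef]; linarith
  -- min point
  obtain ⟨x0, hx0mem, hx0min⟩ := isCompact_Icc.exists_isMinOn (nonempty_Icc.mpr hx1L.le)
    (hcv.continuous.continuousOn (s := Set.Icc x1 L))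
  have hxIcc : x ∈ Set.Icc x1 L := ⟨hx.1.le, hx.2.le⟩
  have hm : v x0 ≤ 0 := le_trans (hx0min hxIcc) hvx
  have hvder : ∀ y, HasDerivAt v (deriv v y) y := fun y => ((hcv.differentiable (by norm_num)) y).hasDerivAt
  have huder : ∀ y, HasDerivAt (deriv v) (deriv (deriv v) y) y := fun y => (hdu y).hasDerivAt
  -- claim right: if x0 < L then 0 ≤ deriv v x0
  have hright : x0 < L → 0 ≤ deriv v x0 := by
    intro hx0L
    by_contra hneg
    push_neg at hneg
    have hev := ev_lt_right' (hvder x0) hneg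
    have hmem : Set.Ioc x0 L ∈ nhdsWithin x0 (Set.Ioi x0) := Ioc_mem_nhdsGT_of_mem ⟨le_refl _, hx0L⟩
    obtain ⟨y, hy1, hy2⟩ := (hev.and (eventually_mem_set.mpr hmem)).exists
    exact absurd (hx0min ⟨le_trans hx0mem.1 hy2.1.le, hy2.2⟩) (not_le.mpr hy1)
  have hleft : x1 < x0 → deriv v x0 ≤ 0 := by
    intro hx1x0
    by_contra hpos
    push_neg at hpos
    have hev := ev_lt_left' (hvder x0) hpos
    have hmem : Set.Ico x1 x0 ∈ nhdsWithin x0 (Set.Iio x0) := Ico_mem_nhdsLT_of_mem ⟨hx1x0, le_refl _⟩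
    obtain ⟨y, hy1, hy2⟩ := (hev.and (eventually_mem_set.mpr hmem)).exists
    exact absurd (hx0min ⟨hy2.1, le_trans hy2.2.le hx0mem.2⟩) (not_le.mpr hy1)
  -- deriv v x0 = 0
  have hu0 : deriv v x0 = 0 := by
    rcases eq_or_lt_of_le hx0mem.2 with hL | hL
    · rw [hL]; exact hbvL
    rcases eq_or_lt_of_le hx0mem.1 with h1' | h1'
    · -- x0 = x1
      have h0 : d2 * deriv v x0 = a2 * v x0 := h1' ▸ hbv
      have := hright hL
      nlinarith [mul_nonneg ha2.le (neg_nonneg.mpr hm)]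
    · exact le_antisymm (hleft h1') (hright hL)
  -- second derivative negative at x0
  have hdu0 : deriv (deriv v) x0 < 0 := by
    have := hodev x0 hx0mem
    rw [hu0] at this
    nlinarith [mul_nonpos_of_nonneg_of_nonpos hq.le hm]
  -- final contradiction
  rcases lt_or_eq_of_le hx0mem.2 with hL | hL
  · -- x0 < L : deriv v < 0 just to the right
    have hev := ev_lt_right' (huder x0) hdu0
    rw [hu0] at hev
    obtain ⟨b, hb, hsub⟩ := mem_nhdsGT_iff_exists_Ioc_subset.mp hev
    set b' := min b L with hb'def
    have hx0b' : x0 < b' := lt_min hb hL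
    have hanti : StrictAntiOn v (Set.Icc x0 b') := by
      apply strictAntiOn_of_deriv_neg (convex_Icc _ _)
        (hcv.continuous.continuousOn)
      intro y hy
      rw [interior_Icc] at hy
      exact hsub ⟨hy.1, le_trans hy.2.le (min_le_left _ _)⟩
    have hlt' : v b' < v x0 := hanti ⟨le_refl _, hx0b'.le⟩ ⟨hx0b'.le, le_refl _⟩ hx0b'
    have : b' ∈ Set.Icc x1 L := ⟨le_trans hx0mem.1 hx0b'.le, min_le_right _ _⟩
    exact absurd (hx0min this) (not_le.mpr hlt')
  · -- x0 = L : deriv v > 0 just to the left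
    have hev := ev_gt_left' (huder x0) hdu0
    rw [hu0] at hev
    have hev' : ∀ᶠ y in nhdsWithin x0 (Set.Iio x0), 0 < deriv v y := hev
    obtain ⟨b, hb, hsub⟩ := mem_nhdsLT_iff_exists_Ico_subset.mp hev'
    set b' := max b x1 with hb'def
    have hx0b' : b' < x0 := max_lt hb (hL ▸ hx1L)
    have hmono : StrictMonoOn v (Set.Icc b' x0) := by
      apply strictMonoOn_of_deriv_pos (convex_Icc _ _)
        (hcv.continuous.continuousOn)
      intro y hy
      rw [interior_Icc] at hy
      exact hsub ⟨le_trans (le_max_left _ _) hy.1.le, hy.2⟩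
    have hlt' : v b' < v x0 := hmono ⟨le_refl _, hx0b'.le⟩ ⟨hx0b'.le, le_refl _⟩ hx0b'
    have : b' ∈ Set.Icc x1 L := ⟨le_max_right _ _, le_trans hx0b'.le hx0mem.2⟩
    exact absurd (hx0min this) (not_le.mpr hlt')
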